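/- arXiv:1510.00579 — 2 statements merged into one kernel-verified Lean document; each statement's English description precedes it below -/
import Mathlib

section
/- Let ξ_1, ξ_2, … be independent Bernoulli variables with P(ξ_i=1)=p_i ∈ (0,1), and D = min{n : ξ_n = ⋯ = ξ_{n+ℓ-1} = 1} the start of the first run of ℓ ones. Then P(D = n+1) = q_n · P(D > n−ℓ) · ∏_{j=n+1}^{n+ℓ} p_j, where q_n = 1 − p_n. -/
/-!
The event `{D = n + 1}` says: no run of `ℓ` ones lies inside `[1, n)`, `ξ n = 0` and
`ξ (n + 1) = ⋯ = ξ (n + ℓ) = 1`. The first condition only involves `ξ 1, …, ξ (n - 1)` and is the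
event `{D > n - ℓ}`, while the rest is a fixed pattern on the disjoint block `[n, n + ℓ]`, so
independence factorizes the probability.
-/

open MeasureTheory Set Filter
open scoped ENNReal

/-- `ξ 1, ξ 2, …` are independent Bernoulli variables with success
probabilities `p i ∈ (0,1)` (the value `ξ 0` is irrelevant). -/
structure IsBernoulliSeq {Ω : Type*} [MeasurableSpace Ω] (P : Measure Ω)
    (p : ℕ → ℝ) (ξ : ℕ → Ω → Bool) : Prop where
  meas : ∀ i, Measurable (ξ i)
  indep : ProbabilityTheory.iIndepFun ξ P
  prob : ∀ i, 1 ≤ i → P {ω | ξ i ω = true} = ENNReal.ofReal (p i)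
  range : ∀ i, 1 ≤ i → 0 < p i ∧ p i < 1

/-- `D`, the index of the start of the first run of `ℓ` consecutive ones
(indices start at 1); equals `⊤` if no such run occurs. -/
noncomputable def runTime {Ω : Type*} (ξ : ℕ → Ω → Bool) (ℓ : ℕ) (ω : Ω) : ℕ∞ :=
  sInf {x : ℕ∞ | ∃ n : ℕ, x = (n : ℕ∞) ∧ 1 ≤ n ∧ ∀ j < ℓ, ξ (n + j) ω = true}

/-- The tail probability `P(D > m)`, with the convention that it equals `1`
for `m ≤ 0`. -/
noncomputable def runTail {Ω : Type*} [MeasurableSpace Ω] (P : Measure Ω)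
    (D : Ω → ℕ∞) (m : ℤ) : ℝ≥0∞ :=
  if m ≤ 0 then 1 else P {ω | (m.toNat : ℕ∞) < D ω}

theorem ProbabilityTheory.iIndepFun.measure_inter_of_dependsOn {Ω ι β : Type*}
    [MeasurableSpace Ω] {P : Measure Ω} [MeasurableSpace β] [Countable β]
    [MeasurableSingletonClass β] {ξ : ι → Ω → β} (hξ : ProbabilityTheory.iIndepFun ξ P)
    (hmeas : ∀ i, Measurable (ξ i)) {S T : Finset ι} (hST : Disjoint S T)
    {A B : Set (ι → β)} (hA : DependsOn (· ∈ A) (S : Set ι)) (hB : DependsOn (· ∈ B) (T : Set ι)) :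
    P {ω | (fun i => ξ i ω) ∈ A ∩ B} =
      P {ω | (fun i => ξ i ω) ∈ A} * P {ω | (fun i => ξ i ω) ∈ B} := by
  have preimage_restrict {S : Finset ι} {A : Set (ι → β)} (hA : DependsOn (· ∈ A) (S : Set ι)) :
      {ω | (fun i => ξ i ω) ∈ A} = (fun ω (i : S) => ξ i ω) ⁻¹' (S.restrict '' A) := by
    ext ω
    refine ⟨fun h => ⟨_, h, rfl⟩, fun ⟨x, hx, hxω⟩ => ?_⟩
    exact (hA (y := fun i => ξ i ω) fun i hi => congrFun hxω ⟨i, hi⟩).mp hx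
  change P ({ω | _ ∈ A} ∩ {ω | _ ∈ B}) = _
  rw [preimage_restrict hA, preimage_restrict hB]
  exact (hξ.indepFun_finset S T hST hmeas).measure_inter_preimage_eq_mul _ _
    (Set.to_countable _).measurableSet (Set.to_countable _).measurableSet

def HasRunAt (x : ℕ → Bool) (ℓ k : ℕ) : Prop :=
  ∀ j < ℓ, x (k + j) = true

section runTime

variable {Ω : Type*} (ξ : ℕ → Ω → Bool) (ℓ : ℕ) (ω : Ω)

lemma lt_runTime_iff (m : ℕ) :
    (m : ℕ∞) < runTime ξ ℓ ω ↔ ∀ k, 1 ≤ k → k ≤ m → ¬ HasRunAt (fun i => ξ i ω) ℓ k := by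
  rw [runTime, ← not_le, ← ENat.lt_add_one_iff (ENat.natCast_ne_top m), sInf_lt_iff]
  simp only [Set.mem_ofPred_eq]
  constructor
  · intro h k hk hkm hrun
    exact h ⟨k, ⟨k, rfl, hk, hrun⟩, by exact_mod_cast Nat.lt_succ_of_le hkm⟩
  · rintro h ⟨_, ⟨k, rfl, hk, hrun⟩, hkm⟩
    exact h k hk (Nat.le_of_lt_succ (by exact_mod_cast hkm)) hrun

lemma runTime_pos : 0 < runTime ξ ℓ ω := by
  exact_mod_cast (lt_runTime_iff ξ ℓ ω 0).mpr fun k hk hk0 => absurd hk (by omega)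

lemma runTime_eq_add_one_iff (n : ℕ) :
    runTime ξ ℓ ω = ((n + 1 : ℕ) : ℕ∞) ↔
      (∀ k, 1 ≤ k → k ≤ n → ¬ HasRunAt (fun i => ξ i ω) ℓ k) ∧
        HasRunAt (fun i => ξ i ω) ℓ (n + 1) := by
  rw [le_antisymm_iff, ← not_lt, lt_runTime_iff, Nat.cast_succ,
    ENat.add_one_le_iff (ENat.natCast_ne_top n), lt_runTime_iff]
  constructor
  · rintro ⟨hrun, hfree⟩
    refine ⟨hfree, by_contra fun hnrun => hrun fun k hk hkn => ?_⟩
    rcases Nat.lt_or_eq_of_le hkn with hkn | rfl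
    exacts [hfree k hk (Nat.le_of_lt_succ hkn), hnrun]
  · rintro ⟨hfree, hrun⟩
    exact ⟨fun h => h (n + 1) (Nat.le_add_left 1 n) le_rfl hrun, hfree⟩

end runTime

lemma runTail_eq_measure {Ω : Type*} [MeasurableSpace Ω] (P : Measure Ω) [IsProbabilityMeasure P]
    (D : Ω → ℕ∞) (hD : ∀ ω, 0 < D ω) (m : ℤ) :
    runTail P D m = P {ω | (m.toNat : ℕ∞) < D ω} := by
  rw [runTail]
  split_ifs with hm
  · simp [Int.toNat_eq_zero.mpr hm, hD]
  · rfl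

def runFreeBefore (ℓ n : ℕ) : Set (ℕ → Bool) :=
  {x | ∀ k, 1 ≤ k → k + ℓ ≤ n → ¬ HasRunAt x ℓ k}

def blockPattern (ℓ n : ℕ) : Set (ℕ → Bool) :=
  {x | ∀ i ∈ Finset.Icc n (n + ℓ), x i = decide (n < i)}

lemma dependsOn_runFreeBefore (ℓ n : ℕ) :
    DependsOn (· ∈ runFreeBefore ℓ n) (Finset.range n : Set ℕ) := by
  intro x y hxy
  have hrun : ∀ k, k + ℓ ≤ n → (HasRunAt x ℓ k ↔ HasRunAt y ℓ k) := fun k hk =>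
    forall₂_congr fun j hj => by rw [hxy (k + j) (Finset.mem_range.mpr (by omega))]
  simp only [runFreeBefore, Set.mem_ofPred_eq, eq_iff_iff]
  exact forall₃_congr fun k _ hk => not_congr (hrun k hk)

lemma dependsOn_blockPattern (ℓ n : ℕ) :
    DependsOn (· ∈ blockPattern ℓ n) (Finset.Icc n (n + ℓ) : Set ℕ) := by
  intro x y hxy
  simp only [blockPattern, Set.mem_ofPred_eq, eq_iff_iff]
  exact forall₂_congr fun i hi => by rw [hxy i hi]

/-- A run starting in `[n + 1 - ℓ, n]` would contain `x n`, so only runs inside `[1, n)` need to be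
excluded once `x n = false`. -/
lemma firstRun_eq_add_one_iff (x : ℕ → Bool) (ℓ : ℕ) {n : ℕ} (hn : 1 ≤ n) :
    ((∀ k, 1 ≤ k → k ≤ n → ¬ HasRunAt x ℓ k) ∧ HasRunAt x ℓ (n + 1)) ↔
      x ∈ runFreeBefore ℓ n ∩ blockPattern ℓ n := by
  simp only [runFreeBefore, blockPattern, HasRunAt, Set.mem_inter_iff, Set.mem_ofPred_eq,
    Finset.mem_Icc]
  constructor
  · rintro ⟨hfree, hrun⟩
    refine ⟨fun k hk hkn => hfree k hk (by omega), fun i ⟨hni, hin⟩ => ?_⟩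
    rcases Nat.eq_or_lt_of_le hni with rfl | hlt
    · rw [decide_eq_false (lt_irrefl n), Bool.eq_false_iff]
      intro hxn
      refine hfree n hn le_rfl fun j hj => ?_
      rcases j with _ | j
      · exact hxn
      · simpa [show n + 1 + j = n + (j + 1) by omega] using hrun j (by omega)
    · simpa [hlt, show n + 1 + (i - n - 1) = i by omega] using hrun (i - n - 1) (by omega)
  · rintro ⟨hfree, hblock⟩
    have hrun : ∀ j < ℓ, x (n + 1 + j) = true := fun j hj => by
      simpa [show n < n + 1 + j by omega] using hblock (n + 1 + j) ⟨by omega, by omega⟩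
    refine ⟨fun k hk hkn hk_run => ?_, hrun⟩
    by_cases hkℓ : k + ℓ ≤ n
    · exact hfree k hk hkℓ hk_run
    · have h1 := hk_run (n - k) (by omega)
      rw [Nat.add_sub_cancel' hkn, hblock n ⟨le_rfl, by omega⟩] at h1
      simp at h1

lemma IsBernoulliSeq.measure_eq_false {Ω : Type*} [MeasurableSpace Ω] {P : Measure Ω}
    [IsProbabilityMeasure P] {p : ℕ → ℝ} {ξ : ℕ → Ω → Bool} (hξ : IsBernoulliSeq P p ξ)
    {i : ℕ} (hi : 1 ≤ i) : P {ω | ξ i ω = false} = ENNReal.ofReal (1 - p i) := by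
  have hcompl : {ω | ξ i ω = false} = {ω | ξ i ω = true}ᶜ := by ext; simp
  rw [hcompl, prob_compl_eq_one_sub, hξ.prob i hi, ENNReal.ofReal_sub _ (hξ.range i hi).1.le,
    ENNReal.ofReal_one]
  exact hξ.meas i (measurableSet_singleton true)

lemma IsBernoulliSeq.measure_blockPattern {Ω : Type*} [MeasurableSpace Ω] {P : Measure Ω}
    [IsProbabilityMeasure P] {p : ℕ → ℝ} {ξ : ℕ → Ω → Bool} (hξ : IsBernoulliSeq P p ξ)
    (ℓ : ℕ) {n : ℕ} (hn : 1 ≤ n) :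
    P {ω | (fun i => ξ i ω) ∈ blockPattern ℓ n} =
      ENNReal.ofReal (1 - p n) * ∏ j ∈ Finset.Icc (n + 1) (n + ℓ), ENNReal.ofReal (p j) := by
  have hinter : {ω | (fun i => ξ i ω) ∈ blockPattern ℓ n} =
      ⋂ i ∈ Finset.Icc n (n + ℓ), ξ i ⁻¹' {decide (n < i)} := by
    ext ω; simp [blockPattern]
  rw [hinter, hξ.indep.measure_inter_preimage_eq_mul _ fun i _ => measurableSet_singleton _,
    ← Finset.insert_Icc_succ_left_eq_Icc (Nat.le_add_right n ℓ), Order.succ_eq_add_one,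
    Finset.prod_insert (by simp)]
  congr 1
  · rw [decide_eq_false (lt_irrefl n)]
    exact hξ.measure_eq_false hn
  · refine Finset.prod_congr rfl fun j hj => ?_
    rw [Finset.mem_Icc] at hj
    rw [decide_eq_true (show n < j by omega)]
    exact hξ.prob j (by omega)

lemma measure_runFreeBefore {Ω : Type*} [MeasurableSpace Ω] (P : Measure Ω)
    [IsProbabilityMeasure P] (ξ : ℕ → Ω → Bool) (ℓ n : ℕ) :
    P {ω | (fun i => ξ i ω) ∈ runFreeBefore ℓ n} = runTail P (runTime ξ ℓ) ((n : ℤ) - ℓ) := by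
  rw [runTail_eq_measure P _ (runTime_pos ξ ℓ), show ((n : ℤ) - ℓ).toNat = n - ℓ by omega]
  congr 1
  ext ω
  exact ((lt_runTime_iff ξ ℓ ω (n - ℓ)).trans
    (forall₂_congr fun k hk => imp_congr_left (by omega))).symm

theorem stmt_16_general {Ω : Type*} [MeasurableSpace Ω] (P : Measure Ω) [IsProbabilityMeasure P]
    (p : ℕ → ℝ) (ξ : ℕ → Ω → Bool) (hξ : IsBernoulliSeq P p ξ)
    (ℓ : ℕ) (n : ℕ) (hn : 1 ≤ n) :
    P {ω | runTime ξ ℓ ω = ((n + 1 : ℕ) : ℕ∞)} =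
      ENNReal.ofReal (1 - p n) * runTail P (runTime ξ ℓ) ((n : ℤ) - ℓ) *
        ∏ j ∈ Finset.Icc (n + 1) (n + ℓ), ENNReal.ofReal (p j) := by
  have hevent : {ω | runTime ξ ℓ ω = ((n + 1 : ℕ) : ℕ∞)} =
      {ω | (fun i => ξ i ω) ∈ runFreeBefore ℓ n ∩ blockPattern ℓ n} := by
    ext ω
    exact (runTime_eq_add_one_iff ξ ℓ ω n).trans (firstRun_eq_add_one_iff _ ℓ hn)
  have hdisj : Disjoint (Finset.range n) (Finset.Icc n (n + ℓ)) := by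
    simp only [Finset.disjoint_left, Finset.mem_range, Finset.mem_Icc]
    omega
  rw [hevent, hξ.indep.measure_inter_of_dependsOn hξ.meas hdisj (dependsOn_runFreeBefore ℓ n)
    (dependsOn_blockPattern ℓ n), measure_runFreeBefore, hξ.measure_blockPattern ℓ hn]
  ring

/-- Corollary 7.1(i): `P(D = n+1) = q_n P(D > n−ℓ) ∏_{j=n+1}^{n+ℓ} p_j`. -/
theorem stmt_16 {Ω : Type*} [MeasurableSpace Ω] (P : Measure Ω) [IsProbabilityMeasure P]
    (p : ℕ → ℝ) (ξ : ℕ → Ω → Bool) (hξ : IsBernoulliSeq P p ξ)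
    (ℓ : ℕ) (hℓ : 1 ≤ ℓ) (n : ℕ) (hn : 1 ≤ n) :
    P {ω | runTime ξ ℓ ω = ((n + 1 : ℕ) : ℕ∞)} =
      ENNReal.ofReal (1 - p n) * runTail P (runTime ξ ℓ) ((n : ℤ) - ℓ) *
        ∏ j ∈ Finset.Icc (n + 1) (n + ℓ), ENNReal.ofReal (p j) :=
  stmt_16_general P p ξ hξ ℓ n hn
end

section
/- For independent Bernoulli trials with success probabilities p_i ∈ (0,1): if ∑ q_i < ∞ or I = ∑_{i≥1} q_i ∏_{j=i+1}^{i+ℓ} p_j = ∞, then the first run of ℓ ones occurs in finite time almost surely; otherwise (I < ∞ and ∑ q_i = ∞) the probability of no run of ℓ ones ever occurring is positive. -/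
open MeasureTheory Set Filter
open scoped ENNReal

/-!
If `∑ q_i < ∞`, the first Borel–Cantelli lemma leaves only finitely many zeros, after which every
window is a run. Otherwise note that a run starts exactly where a zero is followed by `ℓ` ones;
let `A_i` be this event at `i`, so that `I = ∑ P(A_i)`.

If `I = ∞`, the `A_i` with `i` in a suitable residue class mod `ℓ + 1` have disjoint windows,
hence are independent, and still have a divergent sum: by the second Borel–Cantelli lemma one of
them occurs.

If `I < ∞` and `∑ q_i = ∞`, then `P(ξ_{M+1} = ⋯ = ξ_{M+ℓ} = 1) < 1/2` for infinitely many `M`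
(otherwise `P(A_M) ≥ q_M / 2` eventually), so `M` can be chosen with, in addition,
`∑_{i>M} P(A_i) < 1/2`. On the event `W` that `ξ_1 = ⋯ = ξ_M = 0`, any run starts right after
the last zero, which is either `M` or some `i > M` with `A_i`. These events are independent of `W`
and have total probability `< 1`, so with positive probability `W` occurs and no run ever does.
-/

open ProbabilityTheory Function

theorem ENNReal.exists_tsum_mul_add_eq_top {f : ℕ → ℝ≥0∞} (hf : ∑' n, f n = ∞) (N : ℕ)
    [NeZero N] : ∃ r : Fin N, ∑' k, f (k * N + r) = ∞ := by
  rw [← (Nat.divModEquiv N).symm.tsum_eq, ENNReal.tsum_prod', ENNReal.tsum_comm,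
    tsum_fintype] at hf
  by_contra! h
  exact (ENNReal.sum_lt_top.2 fun r _ => (h r).lt_top).ne hf

theorem ENNReal.tsum_eq_top_of_eventually_le {f g : ℕ → ℝ≥0∞} (hf_ne_top : ∀ n, f n ≠ ∞)
    (hfg : ∀ᶠ n in atTop, f n ≤ g n) (hf : ∑' n, f n = ∞) : ∑' n, g n = ∞ := by
  obtain ⟨N, hN⟩ := eventually_atTop.1 hfg
  rw [← ENNReal.summable.sum_add_tsum_nat_add' (k := N), ENNReal.add_eq_top] at hf
  have hf_tail : ∑' n, f (n + N) = ∞ :=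
    hf.resolve_left (ENNReal.sum_ne_top.2 fun n _ => hf_ne_top n)
  refine top_le_iff.1 ?_
  calc ∞ = ∑' n, f (n + N) := hf_tail.symm
    _ ≤ ∑' n, g (n + N) := ENNReal.tsum_le_tsum fun n => hN _ (Nat.le_add_left N n)
    _ ≤ ∑' n, g n := ENNReal.tsum_comp_le_tsum_of_injective (add_left_injective N) g

theorem ENNReal.tsum_ite_one_le_eq_top_iff {f : ℕ → ℝ≥0∞} (hf₀ : f 0 ≠ ∞) :
    (∑' n, if 1 ≤ n then f n else 0) = ∞ ↔ ∑' n, f n = ∞ := by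
  rw [tsum_eq_zero_add' ENNReal.summable, tsum_eq_zero_add' (f := f) ENNReal.summable,
    ENNReal.add_eq_top, ENNReal.add_eq_top]
  simp [hf₀]

theorem pairwise_disjoint_Icc_mul_add (ℓ r : ℕ) :
    Pairwise (Disjoint on fun k : ℕ => Icc (k * (ℓ + 1) + r) (k * (ℓ + 1) + r + ℓ)) := by
  have h_block : ∀ k x, x ∈ Icc (k * (ℓ + 1) + r) (k * (ℓ + 1) + r + ℓ) →
      (x - r) / (ℓ + 1) = k := fun k x hx =>
    Nat.div_eq_of_lt_le (by have := hx.1; omega) (by rw [add_mul]; have := hx.2; omega)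
  intro k k' hne
  exact Set.disjoint_left.2 fun x hx hx' => hne ((h_block k x hx).symm.trans (h_block k' x hx'))

theorem ProbabilityTheory.iIndep.iIndepSet_of_pairwise_disjoint {Ω ι κ : Type*}
    {mΩ : MeasurableSpace Ω} {μ : Measure Ω} {m : ι → MeasurableSpace Ω}
    (h_le : ∀ i, m i ≤ mΩ) (h_indep : iIndep m μ) {B : κ → Set ι}
    (hB : Pairwise (Disjoint on B)) {s : κ → Set Ω}
    (hs : ∀ k, MeasurableSet[⨆ i ∈ B k, m i] (s k)) : iIndepSet s μ := by
  classical
  have := h_indep.isProbabilityMeasure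
  have h_le' : ∀ T : Set ι, ⨆ i ∈ T, m i ≤ mΩ := fun T => iSup₂_le fun i _ => h_le i
  refine (iIndepSet_iff_meas_biInter fun k => h_le' _ _ (hs k)).2 fun F => ?_
  induction F using Finset.induction_on with
  | empty => simp
  | insert a F ha ih =>
    have h_disj : Disjoint (B a) (⋃ k ∈ F, B k) :=
      disjoint_iUnion₂_right.2 fun k hk => hB (ne_of_mem_of_not_mem hk ha).symm
    have h_meas : MeasurableSet[⨆ i ∈ ⋃ k ∈ F, B k, m i] (⋂ k ∈ F, s k) :=
      Finset.measurableSet_biInter F fun k hk =>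
        MeasurableSpace.le_def.1 (biSup_mono fun i hi => mem_biUnion hk hi) _ (hs k)
    rw [Finset.set_biInter_insert, Finset.prod_insert ha, ← ih,
      (Indep_iff _ _ μ).1 (indep_iSup_of_disjoint h_le h_indep h_disj) _ _ (hs a) h_meas]

section Coordinates

variable {Ω ι β : Type*} [MeasurableSpace β]

abbrev coordSigma (ξ : ι → Ω → β) (S : Set ι) : MeasurableSpace Ω :=
  ⨆ i ∈ S, MeasurableSpace.comap (ξ i) ‹_›

variable {ξ : ι → Ω → β}

theorem coordSigma_mono {S T : Set ι} (hST : S ⊆ T) : coordSigma ξ S ≤ coordSigma ξ T :=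
  biSup_mono hST

theorem measurableSet_coordSigma_preimage {S : Set ι} {i : ι} (hi : i ∈ S) {t : Set β}
    (ht : MeasurableSet t) : MeasurableSet[coordSigma ξ S] (ξ i ⁻¹' t) := by
  have h : MeasurableSpace.comap (ξ i) ‹_› ≤ coordSigma ξ S :=
    le_iSup₂ (f := fun j (_ : j ∈ S) => MeasurableSpace.comap (ξ j) ‹_›) i hi
  exact h _ ⟨t, ht, rfl⟩

theorem coordSigma_le [mΩ : MeasurableSpace Ω] (hmeas : ∀ i, Measurable (ξ i)) (S : Set ι) :
    coordSigma ξ S ≤ mΩ :=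
  iSup₂_le fun i _ => (hmeas i).comap_le

theorem ProbabilityTheory.iIndepFun.measure_inter_eq_mul_of_disjoint [MeasurableSpace Ω]
    {P : Measure Ω} (hmeas : ∀ i, Measurable (ξ i)) (hind : iIndepFun ξ P) {S T : Set ι}
    (hST : Disjoint S T) {E F : Set Ω} (hE : MeasurableSet[coordSigma ξ S] E)
    (hF : MeasurableSet[coordSigma ξ T] F) :
    P (E ∩ F) = P E * P F :=
  (Indep_iff _ _ P).1 (indep_iSup_of_disjoint (fun i => (hmeas i).comap_le)
    ((iIndepFun_iff_iIndep _ _ P).1 hind) hST) E F hE hF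

end Coordinates

section Runs

variable {Ω : Type*} {ξ : ℕ → Ω → Bool} {ℓ : ℕ} {ω : Ω}

def coordsEq (ξ : ℕ → Ω → Bool) (S : Finset ℕ) (b : Bool) : Set Ω :=
  ⋂ j ∈ S, {ω | ξ j ω = b}

def zeroThenOnes (ξ : ℕ → Ω → Bool) (ℓ i : ℕ) : Set Ω :=
  {ω | ξ i ω = false} ∩ coordsEq ξ (Finset.Icc (i + 1) (i + ℓ)) true

theorem runTime_ne_top_iff :
    runTime ξ ℓ ω ≠ ⊤ ↔ ∃ n, 1 ≤ n ∧ ∀ j < ℓ, ξ (n + j) ω = true := by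
  simp only [runTime, ne_eq, sInf_eq_top, not_forall, mem_ofPred_eq]
  constructor
  · rintro ⟨_, ⟨n, rfl, hn, hrun⟩, -⟩
    exact ⟨n, hn, hrun⟩
  · rintro ⟨n, hn, hrun⟩
    exact ⟨n, ⟨n, rfl, hn, hrun⟩, ENat.natCast_ne_top n⟩

theorem runTime_ne_top_of_mem_zeroThenOnes {i : ℕ} (h : ω ∈ zeroThenOnes ξ ℓ i) :
    runTime ξ ℓ ω ≠ ⊤ :=
  runTime_ne_top_iff.2 ⟨i + 1, by omega, fun j hj =>
    mem_iInter₂.1 h.2 (i + 1 + j) (Finset.mem_Icc.2 ⟨by omega, by omega⟩)⟩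

/-- The last zero before the start `n` of a run starts a `zeroThenOnes` window. -/
theorem exists_mem_zeroThenOnes_of_run {m n : ℕ} (hm : ξ m ω = false) (hmn : m < n)
    (hrun : ∀ j < ℓ, ξ (n + j) ω = true) : ∃ i, m ≤ i ∧ i < n ∧ ω ∈ zeroThenOnes ξ ℓ i := by
  induction n with
  | zero => omega
  | succ n ih =>
    cases hn : ξ n ω with
    | false =>
      refine ⟨n, by omega, by omega, hn, mem_iInter₂.2 fun k hk => ?_⟩
      have hk := Finset.mem_Icc.1 hk
      simpa [show n + 1 + (k - (n + 1)) = k by omega] using hrun (k - (n + 1)) (by omega)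
    | true =>
      have hmn' : m < n := lt_of_le_of_ne (Nat.lt_succ_iff.1 hmn) (by rintro rfl; simp_all)
      obtain ⟨i, hmi, hin, hi⟩ := ih hmn' fun j hj => by
        rcases j with _ | j
        · exact hn
        · simpa [show n + (j + 1) = n + 1 + j by omega] using hrun j (by omega)
      exact ⟨i, hmi, by omega, hi⟩

theorem measurableSet_coordsEq (S : Finset ℕ) (b : Bool) :
    MeasurableSet[coordSigma ξ S] (coordsEq ξ S b) :=
  Finset.measurableSet_biInter S fun _ hj =>
    measurableSet_coordSigma_preimage (Finset.mem_coe.2 hj) (measurableSet_singleton b)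

theorem measurableSet_zeroThenOnes (i : ℕ) :
    MeasurableSet[coordSigma ξ (Icc i (i + ℓ))] (zeroThenOnes ξ ℓ i) := by
  refine MeasurableSet.inter
    (measurableSet_coordSigma_preimage (by simp) (measurableSet_singleton false)) ?_
  refine coordSigma_mono ?_ _ (measurableSet_coordsEq _ true)
  intro k hk
  simp only [Finset.coe_Icc, mem_Icc] at hk ⊢
  omega

theorem coordsEq_diff_subset_runTime_eq_top (hℓ : 1 ≤ ℓ) {M : ℕ} (hM : 1 ≤ M) :
    coordsEq ξ (Finset.Icc 1 M) false \
        (coordsEq ξ (Finset.Icc (M + 1) (M + ℓ)) true ∪ ⋃ k, zeroThenOnes ξ ℓ (k + (M + 1)))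
      ⊆ {ω | runTime ξ ℓ ω = ⊤} := by
  rintro ω ⟨hzeros, hnot⟩
  by_contra hD
  obtain ⟨n, hn, hrun⟩ := runTime_ne_top_iff.1 hD
  have hzero : ∀ j, 1 ≤ j → j ≤ M → ξ j ω = false :=
    fun j h₁ h₂ => mem_iInter₂.1 hzeros j (Finset.mem_Icc.2 ⟨h₁, h₂⟩)
  have hMn : M < n := by
    by_contra! hnM
    simpa [hzero n hn hnM] using hrun 0 hℓ
  obtain ⟨i, hMi, -, hi⟩ := exists_mem_zeroThenOnes_of_run (hzero M hM le_rfl) hMn hrun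
  rcases hMi.eq_or_lt with rfl | hMi
  · exact hnot (Or.inl hi.2)
  · exact hnot (Or.inr (mem_iUnion.2 ⟨i - (M + 1), by rwa [Nat.sub_add_cancel hMi]⟩))

variable [MeasurableSpace Ω] {P : Measure Ω}

theorem measure_coordsEq (hind : iIndepFun ξ P) (S : Finset ℕ) (b : Bool) :
    P (coordsEq ξ S b) = ∏ j ∈ S, P {ω | ξ j ω = b} :=
  hind.measure_inter_preimage_eq_mul S (sets := fun _ => {b})
    (fun _ _ => measurableSet_singleton _)

theorem measure_zeroThenOnes (hmeas : ∀ i, Measurable (ξ i)) (hind : iIndepFun ξ P) (i : ℕ) :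
    P (zeroThenOnes ξ ℓ i)
      = P {ω | ξ i ω = false} * P (coordsEq ξ (Finset.Icc (i + 1) (i + ℓ)) true) := by
  refine hind.measure_inter_eq_mul_of_disjoint hmeas (S := {i})
    (T := ↑(Finset.Icc (i + 1) (i + ℓ))) (by simp)
    (measurableSet_coordSigma_preimage (mem_singleton i) (measurableSet_singleton false))
    (measurableSet_coordsEq _ true)

theorem measure_runTime_eq_top_of_tsum_ne_top
    (h : ∑' i, P {ω | ξ i ω = false} ≠ ∞) : P {ω | runTime ξ ℓ ω = ⊤} = 0 := by
  refine measure_mono_null (fun ω hω => ?_) (measure_limsup_atTop_eq_zero h)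
  refine mem_limsup_iff_frequently_mem.2 (frequently_atTop.2 fun n => ?_)
  have hnot : ¬ ∀ j < ℓ, ξ (n + 1 + j) ω = true :=
    fun hrun => runTime_ne_top_iff.2 ⟨n + 1, by omega, hrun⟩ hω
  push Not at hnot
  obtain ⟨j, -, hj⟩ := hnot
  exact ⟨n + 1 + j, by omega, by simpa using hj⟩

theorem measure_runTime_eq_top_of_tsum_eq_top [IsProbabilityMeasure P]
    (hmeas : ∀ i, Measurable (ξ i)) (hind : iIndepFun ξ P)
    (h : ∑' i, P (zeroThenOnes ξ ℓ i) = ∞) : P {ω | runTime ξ ℓ ω = ⊤} = 0 := by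
  obtain ⟨r, hr⟩ := ENNReal.exists_tsum_mul_add_eq_top h (ℓ + 1)
  set s : ℕ → Set Ω := fun k => zeroThenOnes ξ ℓ (k * (ℓ + 1) + r)
  have hs_meas : ∀ k, MeasurableSet (s k) :=
    fun k => coordSigma_le hmeas _ _ (measurableSet_zeroThenOnes _)
  have hs_indep : iIndepSet s P :=
    ((iIndepFun_iff_iIndep _ _ P).1 hind).iIndepSet_of_pairwise_disjoint
      (fun i => (hmeas i).comap_le) (pairwise_disjoint_Icc_mul_add ℓ r)
      fun k => measurableSet_zeroThenOnes _
  have h_limsup : P (limsup s atTop)ᶜ = 0 :=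
    (prob_compl_eq_zero_iff (MeasurableSet.measurableSet_limsup hs_meas)).2
      (measure_limsup_eq_one hs_meas hs_indep hr)
  refine measure_mono_null (fun ω hω => ?_) h_limsup
  intro hlim
  obtain ⟨k, hk⟩ := (mem_limsup_iff_frequently_mem.1 hlim).exists
  exact runTime_ne_top_of_mem_zeroThenOnes hk hω

theorem measure_coordsEq_inter_le (hmeas : ∀ i, Measurable (ξ i)) (hind : iIndepFun ξ P)
    (M : ℕ) :
    P (coordsEq ξ (Finset.Icc 1 M) false ∩
        (coordsEq ξ (Finset.Icc (M + 1) (M + ℓ)) true ∪ ⋃ k, zeroThenOnes ξ ℓ (k + (M + 1))))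
      ≤ P (coordsEq ξ (Finset.Icc 1 M) false) *
        (P (coordsEq ξ (Finset.Icc (M + 1) (M + ℓ)) true)
          + ∑' k, P (zeroThenOnes ξ ℓ (k + (M + 1)))) := by
  set W := coordsEq ξ (Finset.Icc 1 M) false
  have hW : MeasurableSet[coordSigma ξ ↑(Finset.Icc 1 M)] W := measurableSet_coordsEq _ _
  rw [inter_union_distrib_left, inter_iUnion, mul_add, ← ENNReal.tsum_mul_left]
  refine (measure_union_le _ _).trans (add_le_add (le_of_eq ?_) ((measure_iUnion_le _).trans
    (le_of_eq (tsum_congr fun k => ?_))))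
  · refine hind.measure_inter_eq_mul_of_disjoint hmeas ?_ hW (measurableSet_coordsEq _ _)
    simp only [Finset.coe_Icc, Set.disjoint_left, mem_Icc]
    omega
  · refine hind.measure_inter_eq_mul_of_disjoint hmeas ?_ hW (measurableSet_zeroThenOnes _)
    simp only [Finset.coe_Icc, Set.disjoint_left, mem_Icc]
    omega

theorem frequently_measure_coordsEq_lt [IsFiniteMeasure P] (hmeas : ∀ i, Measurable (ξ i))
    (hind : iIndepFun ξ P) (hA : ∑' i, P (zeroThenOnes ξ ℓ i) ≠ ∞)
    (hq : ∑' i, P {ω | ξ i ω = false} = ∞) {c : ℝ≥0∞} (hc₀ : c ≠ 0) (hc : c ≠ ∞) :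
    ∃ᶠ M in atTop, P (coordsEq ξ (Finset.Icc (M + 1) (M + ℓ)) true) < c := by
  by_contra h
  simp only [not_frequently, not_lt] at h
  refine hA (ENNReal.tsum_eq_top_of_eventually_le (f := fun M => c * P {ω | ξ M ω = false})
    (fun M => ENNReal.mul_ne_top hc (measure_ne_top _ _)) ?_ ?_)
  · filter_upwards [h] with M hM
    rw [measure_zeroThenOnes hmeas hind, mul_comm]
    exact mul_le_mul_right hM _
  · rw [ENNReal.tsum_mul_left, hq, ENNReal.mul_top hc₀]

theorem measure_runTime_eq_top_pos [IsFiniteMeasure P] (hmeas : ∀ i, Measurable (ξ i))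
    (hind : iIndepFun ξ P) (hpos : ∀ i, 1 ≤ i → P {ω | ξ i ω = false} ≠ 0) (hℓ : 1 ≤ ℓ)
    (hA : ∑' i, P (zeroThenOnes ξ ℓ i) ≠ ∞) (hq : ∑' i, P {ω | ξ i ω = false} = ∞) :
    0 < P {ω | runTime ξ ℓ ω = ⊤} := by
  have h_tail : ∀ᶠ M in atTop, ∑' k, P (zeroThenOnes ξ ℓ (k + (M + 1))) < 2⁻¹ :=
    ((ENNReal.tendsto_sum_nat_add _ hA).comp (tendsto_add_atTop_nat 1)).eventually_lt_const
      (by norm_num)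
  obtain ⟨M, hB, htail, hM⟩ := ((frequently_measure_coordsEq_lt hmeas hind hA hq
    (c := 2⁻¹) (by simp) (by simp)).and_eventually (h_tail.and (eventually_ge_atTop 1))).exists
  set W := coordsEq ξ (Finset.Icc 1 M) false
  set U := coordsEq ξ (Finset.Icc (M + 1) (M + ℓ)) true ∪ ⋃ k, zeroThenOnes ξ ℓ (k + (M + 1))
  have hW : P W ≠ 0 := by
    rw [measure_coordsEq hind]
    exact Finset.prod_ne_zero_iff.2 fun i hi => hpos i (Finset.mem_Icc.1 hi).1
  have hWU : P (W ∩ U) < P W :=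
    calc P (W ∩ U) ≤ P W * (P (coordsEq ξ (Finset.Icc (M + 1) (M + ℓ)) true)
          + ∑' k, P (zeroThenOnes ξ ℓ (k + (M + 1)))) := measure_coordsEq_inter_le hmeas hind M
      _ < P W * 1 := by
        refine ENNReal.mul_lt_mul_right hW (measure_ne_top _ _) ?_
        simpa [ENNReal.inv_two_add_inv_two] using ENNReal.add_lt_add hB htail
      _ = P W := mul_one _
  calc 0 < P W - P (W ∩ U) := tsub_pos_of_lt hWU
    _ ≤ P (W \ (W ∩ U)) := le_measure_sdiff
    _ ≤ P {ω | runTime ξ ℓ ω = ⊤} := by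
      rw [sdiff_self_inter]
      exact measure_mono (coordsEq_diff_subset_runTime_eq_top hℓ hM)

end Runs

namespace IsBernoulliSeq

variable {Ω : Type*} [MeasurableSpace Ω] {P : Measure Ω} [IsProbabilityMeasure P] {p : ℕ → ℝ}
  {ξ : ℕ → Ω → Bool} {i : ℕ}

theorem measure_eq_false_s17 (hξ : IsBernoulliSeq P p ξ) (hi : 1 ≤ i) :
    P {ω | ξ i ω = false} = ENNReal.ofReal (1 - p i) := by
  have h_compl : {ω | ξ i ω = false} = {ω | ξ i ω = true}ᶜ := by ext; simp
  have h_meas : MeasurableSet {ω | ξ i ω = true} := hξ.meas i (measurableSet_singleton true)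
  rw [h_compl, prob_compl_eq_one_sub h_meas, hξ.prob i hi,
    ENNReal.ofReal_sub 1 (hξ.range i hi).1.le, ENNReal.ofReal_one]

theorem measure_zeroThenOnes_eq_ofReal (hξ : IsBernoulliSeq P p ξ) (ℓ : ℕ) (hi : 1 ≤ i) :
    P (zeroThenOnes ξ ℓ i)
      = ENNReal.ofReal ((1 - p i) * ∏ j ∈ Finset.Icc (i + 1) (i + ℓ), p j) := by
  have hp : ∀ j ∈ Finset.Icc (i + 1) (i + ℓ), 1 ≤ j := fun j hj => by
    have := (Finset.mem_Icc.1 hj).1; omega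
  rw [measure_zeroThenOnes hξ.meas hξ.indep, measure_coordsEq hξ.indep,
    hξ.measure_eq_false_s17 hi, ENNReal.ofReal_mul (by linarith [(hξ.range i hi).2]),
    ENNReal.ofReal_prod_of_nonneg fun j hj => (hξ.range j (hp j hj)).1.le]
  exact congrArg _ (Finset.prod_congr rfl fun j hj => hξ.prob j (hp j hj))

end IsBernoulliSeq

/-- Corollary 7.1(ii): if `∑ q_i < ∞` or `I = ∑_{i≥1} q_i ∏_{j=i+1}^{i+ℓ} p_j = ∞`
then `D < ∞` a.s.; otherwise (`I < ∞` and `∑ q_i = ∞`) `P(D = ∞) > 0`. -/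
theorem stmt_17 {Ω : Type*} [MeasurableSpace Ω] (P : Measure Ω) [IsProbabilityMeasure P]
    (p : ℕ → ℝ) (ξ : ℕ → Ω → Bool) (hξ : IsBernoulliSeq P p ξ)
    (ℓ : ℕ) (hℓ : 1 ≤ ℓ) :
    (((∑' i : ℕ, if 1 ≤ i then ENNReal.ofReal (1 - p i) else 0) ≠ ⊤ ∨
      (∑' i : ℕ, if 1 ≤ i then
        ENNReal.ofReal ((1 - p i) * ∏ j ∈ Finset.Icc (i + 1) (i + ℓ), p j) else 0) = ⊤) →
      P {ω | runTime ξ ℓ ω = ⊤} = 0) ∧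
    (((∑' i : ℕ, if 1 ≤ i then
        ENNReal.ofReal ((1 - p i) * ∏ j ∈ Finset.Icc (i + 1) (i + ℓ), p j) else 0) ≠ ⊤ ∧
      (∑' i : ℕ, if 1 ≤ i then ENNReal.ofReal (1 - p i) else 0) = ⊤) →
      0 < P {ω | runTime ξ ℓ ω = ⊤}) := by
  have hq : (∑' i : ℕ, if 1 ≤ i then ENNReal.ofReal (1 - p i) else 0)
      = ∑' i : ℕ, if 1 ≤ i then P {ω | ξ i ω = false} else 0 :=
    tsum_congr fun i => by split_ifs with hi <;> simp [hξ.measure_eq_false_s17, hi]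
  have hI : (∑' i : ℕ, if 1 ≤ i then
        ENNReal.ofReal ((1 - p i) * ∏ j ∈ Finset.Icc (i + 1) (i + ℓ), p j) else 0)
      = ∑' i : ℕ, if 1 ≤ i then P (zeroThenOnes ξ ℓ i) else 0 :=
    tsum_congr fun i => by split_ifs with hi <;> simp [hξ.measure_zeroThenOnes_eq_ofReal, hi]
  have hpos : ∀ i, 1 ≤ i → P {ω | ξ i ω = false} ≠ 0 := fun i hi => by
    simpa [hξ.measure_eq_false_s17 hi] using (hξ.range i hi).2
  rw [hq, hI, ne_eq, ne_eq,
    ENNReal.tsum_ite_one_le_eq_top_iff (f := fun i => P {ω | ξ i ω = false}) (measure_ne_top _ _),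
    ENNReal.tsum_ite_one_le_eq_top_iff (f := fun i => P (zeroThenOnes ξ ℓ i)) (measure_ne_top _ _)]
  exact ⟨fun h => h.elim measure_runTime_eq_top_of_tsum_ne_top
      (measure_runTime_eq_top_of_tsum_eq_top hξ.meas hξ.indep),
    fun h => measure_runTime_eq_top_pos hξ.meas hξ.indep hpos hℓ h.1 h.2⟩
end
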